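/- arXiv:1204.6445 — 3 statements merged into one kernel-verified Lean document; each statement's English description precedes it below -/
import Mathlib

section
/- For any two redundant 4×4 complex matrices M and M', φ(M M') = φ(M) φ(M'); i.e., φ is a semigroup homomorphism from redundant 4×4 matrices to 3×3 matrices under matrix multiplication. -/
open Matrix

noncomputable def A : Matrix (Fin 3) (Fin 4) ℂ :=
  !![1, 0, 0, 0; 0, 1/2, 1/2, 0; 0, 0, 0, 1]

def B : Matrix (Fin 4) (Fin 3) ℂ :=
  !![1, 0, 0; 0, 1, 0; 0, 1, 0; 0, 0, 1]

def Redundant (M : Matrix (Fin 4) (Fin 4) ℂ) : Prop :=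
  (∀ j, M 1 j = M 2 j) ∧ (∀ i, M i 1 = M i 2)

/-! `B * A` averages the second and third rows, so it fixes every matrix whose second and third
rows agree; inserting it between `M` and `M'` turns `A (M M') B` into `(A M B) (A M' B)`. -/

theorem B_mul_A :
    B * A = !![1, 0, 0, 0; 0, 1/2, 1/2, 0; 0, 1/2, 1/2, 0; 0, 0, 0, 1] := by
  ext i j
  fin_cases i <;> fin_cases j <;> simp [A, B, mul_apply, Fin.sum_univ_succ]

theorem B_mul_A_mul_of_row_one_eq_row_two {n : Type*} {M : Matrix (Fin 4) n ℂ}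
    (h : ∀ j, M 1 j = M 2 j) : B * A * M = M := by
  ext i j
  fin_cases i <;> simp [B_mul_A, mul_apply, Fin.sum_univ_succ, h j] <;> ring

theorem phi_hom_general (M M' : Matrix (Fin 4) (Fin 4) ℂ)
    (hM' : Redundant M') :
    A * (M * M') * B = (A * M * B) * (A * M' * B) := by
  conv_lhs => rw [← B_mul_A_mul_of_row_one_eq_row_two hM'.1]
  simp only [Matrix.mul_assoc]

theorem phi_hom (M M' : Matrix (Fin 4) (Fin 4) ℂ)
    (hM : Redundant M) (hM' : Redundant M') :
    A * (M * M') * B = (A * M * B) * (A * M' * B) :=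
  phi_hom_general M M' hM'
end

section
/- Let λ ∈ ℂ be nonzero and not a root of unity, and let c_0, ..., c_t be nonnegative integers summing to n. Let M be the n×n block matrix M = [B_0 B_1 ⋯ B_t] where B_k is n×c_k with entry at row r and column c equal to r^{c-1}·λ^{k r} (rows and columns 1-indexed). Then M is nonsingular. -/
/-!
A kernel vector of the matrix gives polynomials `p k` with `deg p k < c k` such that the
exponential polynomial `F x = ∑ k, p k (x) * λ ^ (k * x)` vanishes at `x = 1, …, n`.
For `k₀` with `c k₀ > 0`, the function `F (· + 1) - λ ^ k₀ * F` is again of this shape, with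
polynomials `λ ^ k • p k (· + 1) - λ ^ k₀ • p k`; the `k₀`-th one has lower degree, and the new
function vanishes at `n - 1` consecutive points. By induction these polynomials vanish: comparing
leading coefficients (the `λ ^ k` are distinct) kills `p k` for `k ≠ k₀`, and `p k₀` is
`1`-periodic, hence constant, hence zero.
-/

open Polynomial Matrix

theorem pow_injective_of_ne_zero_of_pow_ne_one {G₀ : Type*} [GroupWithZero G₀] {x : G₀}
    (hx : x ≠ 0) (h : ∀ m : ℕ, 0 < m → x ^ m ≠ 1) : Function.Injective (x ^ · : ℕ → G₀) := by
  have : ¬IsOfFinOrder (Units.mk0 x hx) := by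
    rw [isOfFinOrder_iff_pow_eq_one]
    rintro ⟨m, hm, hxm⟩
    exact h m hm (by simpa [Units.ext_iff] using hxm)
  intro a b hab
  exact injective_pow_iff_not_isOfFinOrder.mpr this (Units.ext (by simpa using hab))

namespace Polynomial

theorem coeff_sum_fin_C_mul_X_pow {R : Type*} [Semiring R] {n : ℕ} (f : Fin n → R) (i : Fin n) :
    (∑ j : Fin n, C (f j) * X ^ (j : ℕ)).coeff i = f i := by
  simp [Fin.val_inj]

section Ring

variable {R : Type*} [Ring R]

theorem degree_taylor_sub_lt {p : R[X]} (hp : p ≠ 0) (r : R) :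
    (taylor r p - p).degree < p.degree := by
  simpa [degree_taylor] using degree_sub_lt_left (degree_taylor p r)
    ((taylor_eq_zero r p).not.mpr hp) (leadingCoeff_taylor r p)

theorem degree_taylor_sub_lt_of_degree_lt_succ {p : R[X]} {m : ℕ} (hp : p.degree < ↑(m + 1))
    (r : R) : (taylor r p - p).degree < m := by
  rcases eq_or_ne p 0 with rfl | hp0
  · simp
  refine (degree_taylor_sub_lt hp0 r).trans_le (degree_le_of_natDegree_le ?_)
  exact Nat.lt_succ_iff.mp ((natDegree_lt_iff_degree_lt hp0).mpr hp)

theorem degree_smul_taylor_sub_smul_le (a b r : R) (p : R[X]) :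
    (a • taylor r p - b • p).degree ≤ p.degree :=
  (degree_sub_le _ _).trans <|
    max_le ((degree_smul_le a _).trans (degree_taylor p r).le) (degree_smul_le b p)

theorem eq_zero_of_smul_taylor_eq_smul [IsDomain R] {a b r : R} {p : R[X]} (hab : a ≠ b)
    (h : a • taylor r p = b • p) : p = 0 := by
  have hlc := congrArg (coeff · p.natDegree) h
  simp only [coeff_smul, coeff_taylor_natDegree, coeff_natDegree, smul_eq_mul] at hlc
  rw [← leadingCoeff_eq_zero]
  refine (mul_eq_zero.mp ?_).resolve_left (sub_ne_zero.mpr hab)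
  rw [sub_mul, hlc, sub_self]

end Ring

theorem eq_C_eval_zero_of_taylor_eq_self {R : Type*} [CommRing R] [IsDomain R] [CharZero R]
    {r : R} (hr : r ≠ 0) {p : R[X]} (h : taylor r p = p) : p = C (p.eval 0) := by
  have periodic (k : ℕ) : p.eval (k * r) = p.eval 0 := by
    induction k with
    | zero => simp
    | succ k ih => rw [Nat.cast_succ, add_one_mul, ← taylor_eval, h, ih]
  refine eq_of_infinite_eval_eq _ _ <|
    Set.infinite_of_injective_forall_mem (f := fun k : ℕ => (k : R) * r) ?_ fun k => ?_
  · exact fun k l hkl => Nat.cast_injective (mul_right_cancel₀ hr hkl)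
  · simp [periodic k]

end Polynomial

section ExpPoly

variable {R ι : Type*} [CommRing R] [Fintype ι]

def expPoly (p : ι → R[X]) (μ : ι → R) (x : ℕ) : R :=
  ∑ i, (p i).eval (x : R) * μ i ^ x

theorem expPoly_smul_taylor_sub_smul (p : ι → R[X]) (μ : ι → R) (a : R) (x : ℕ) :
    expPoly (fun i => μ i • taylor 1 (p i) - a • p i) μ x =
      expPoly p μ (x + 1) - a * expPoly p μ x := by
  simp only [expPoly, Finset.mul_sum, ← Finset.sum_sub_distrib, eval_sub, eval_smul, taylor_eval,
    smul_eq_mul, Nat.cast_succ, pow_succ]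
  exact Finset.sum_congr rfl fun i _ => by ring

variable [IsDomain R] [CharZero R]

theorem eq_zero_of_expPoly_eq_zero {μ : ι → R} (hμ : Function.Injective μ) (hμ0 : ∀ i, μ i ≠ 0)
    {c : ι → ℕ} {p : ι → R[X]} (hp : ∀ i, (p i).degree < c i)
    (h : ∀ x < ∑ i, c i, expPoly p μ (x + 1) = 0) : p = 0 := by
  classical
  induction hn : ∑ i, c i generalizing c p with
  | zero =>
    funext i
    have hci : c i = 0 := Finset.sum_eq_zero_iff.mp hn i (Finset.mem_univ i)
    simpa [hci] using hp i
  | succ n ih =>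
    obtain ⟨i₀, -, hci₀⟩ := Finset.exists_ne_zero_of_sum_ne_zero (hn.trans_ne n.succ_ne_zero)
    obtain ⟨m, hm⟩ := Nat.exists_eq_add_one_of_ne_zero hci₀
    set q : ι → R[X] := fun i => μ i • taylor 1 (p i) - μ i₀ • p i
    have hc' : ∑ i, Function.update c i₀ m i = n := by
      rw [Finset.sum_update_of_mem (Finset.mem_univ i₀)]
      rw [Finset.sum_eq_sum_sdiff_singleton_add (Finset.mem_univ i₀), hm] at hn
      omega
    have hq : q = 0 := by
      refine ih (fun i => ?_) (fun x hx => ?_) hc'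
      · rcases eq_or_ne i i₀ with rfl | hi
        · have hqi : q i = μ i • (taylor 1 (p i) - p i) := (smul_sub _ _ _).symm
          rw [hqi, Function.update_self]
          exact (degree_smul_le _ _).trans_lt
            (degree_taylor_sub_lt_of_degree_lt_succ (hm ▸ hp i) 1)
        · rw [Function.update_of_ne hi]
          exact (degree_smul_taylor_sub_smul_le _ _ _ _).trans_lt (hp i)
      · rw [hc'] at hx
        rw [hn] at h
        rw [expPoly_smul_taylor_sub_smul, h (x + 1) (by omega), h x (by omega), mul_zero,
          sub_zero]
    have hpi (i) (hi : i ≠ i₀) : p i = 0 :=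
      eq_zero_of_smul_taylor_eq_smul (hμ.ne hi) (sub_eq_zero.mp (congrFun hq i))
    have hpi₀ : p i₀ = C ((p i₀).eval 0) :=
      eq_C_eval_zero_of_taylor_eq_self one_ne_zero
        (smul_right_injective _ (hμ0 i₀) (sub_eq_zero.mp (congrFun hq i₀)))
    have h1 : (p i₀).eval 0 * μ i₀ = 0 := by
      have := h 0 (hn ▸ n.succ_pos)
      rwa [expPoly, Finset.sum_eq_single i₀ (fun i _ hi => by simp [hpi i hi]) (by simp), hpi₀,
        eval_C, pow_one] at this
    funext i
    rcases eq_or_ne i i₀ with rfl | hi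
    · rw [hpi₀, (mul_eq_zero.mp h1).resolve_right (hμ0 i), C_0, Pi.zero_apply]
    · exact hpi i hi

end ExpPoly

theorem block_vandermonde_nonsingular_general (n t : ℕ)
    (c : Fin (t + 1) → ℕ) (hc : ∑ k, c k = n)
    (l : ℂ) (hl : l ≠ 0) (hru : ∀ m : ℕ, 0 < m → l ^ m ≠ 1)
    (e : Fin n ≃ (k : Fin (t + 1)) × Fin (c k)) :
    (Matrix.of fun r j : Fin n =>
        (((r : ℕ) + 1 : ℂ)) ^ ((e j).2 : ℕ) * l ^ (((e j).1 : ℕ) * ((r : ℕ) + 1))).det ≠ 0 := by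
  intro hdet
  obtain ⟨v, hv0, hv⟩ := exists_mulVec_eq_zero_iff.mpr hdet
  set p : Fin (t + 1) → ℂ[X] := fun k => ∑ j : Fin (c k), C (v (e.symm ⟨k, j⟩)) * X ^ (j : ℕ)
  have hrow (r : Fin n) : expPoly p (fun k => l ^ (k : ℕ)) (r + 1) = 0 := by
    refine Eq.trans ?_ (congrFun hv r)
    simp only [mulVec, dotProduct, of_apply, expPoly, p, eval_finsetSum, eval_mul, eval_C,
      eval_pow, eval_X, Finset.sum_mul]
    rw [← Fintype.sum_sigma', ← e.sum_comp]
    refine Fintype.sum_congr _ _ fun j => ?_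
    simp only [Sigma.eta, Equiv.symm_apply_apply, ← pow_mul]
    push_cast
    ring
  have hp : p = 0 :=
    eq_zero_of_expPoly_eq_zero
      ((pow_injective_of_ne_zero_of_pow_ne_one hl hru).comp Fin.val_injective)
      (fun k => pow_ne_zero _ hl) (fun k => degree_sum_fin_lt _) fun x hx => hrow ⟨x, hc ▸ hx⟩
  refine hv0 (funext fun j => ?_)
  have hcoeff := congrArg (coeff · (e j).2) (congrFun hp (e j).1)
  simpa only [p, coeff_sum_fin_C_mul_X_pow, Sigma.eta, Equiv.symm_apply_apply, Pi.zero_apply,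
    coeff_zero] using hcoeff

/-- Lemma: the block-Vandermonde-type matrix `[B_0 B_1 ⋯ B_t]`, where block `B_k`
has `c k` columns and its entry at (1-indexed) row `r` and column `c` is
`r^(c-1) * λ^(k*r)`, is nonsingular when `λ ≠ 0` is not a root of unity.
Columns are indexed by the sigma type of blocks via an arbitrary bijection
with `Fin n` (nonsingularity is invariant under column permutation). -/
theorem block_vandermonde_nonsingular (n t : ℕ) (hn : 0 < n)
    (c : Fin (t + 1) → ℕ) (hc : ∑ k, c k = n)
    (l : ℂ) (hl : l ≠ 0) (hru : ∀ m : ℕ, 0 < m → l ^ m ≠ 1)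
    (e : Fin n ≃ (k : Fin (t + 1)) × Fin (c k)) :
    (Matrix.of fun r j : Fin n =>
        (((r : ℕ) + 1 : ℂ)) ^ ((e j).2 : ℕ) * l ^ (((e j).1 : ℕ) * ((r : ℕ) + 1))).det ≠ 0 :=
  block_vandermonde_nonsingular_general n t c hc l hl hru e
end

section
/- For every complex 2×2 matrix T, det(φ(T^{⊗2})) = (det T)^3, where φ(M) = A M B with A and B as given. -/
/-!
`A` and `B` compress the action of `T ⊗ T` on `ℂ² ⊗ ℂ²` to its symmetric part, so
`φ(T^{⊗2})` is the matrix of the symmetric square `Sym² T`; its determinant is the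
classical `(det T) ^ 3`, a polynomial identity in the four entries of `T`.
-/

open Matrix

/-- Indexing of `Fin 4` by pairs of bits, ordered 00, 01, 10, 11. -/
def bits : Fin 4 → Fin 2 × Fin 2 := ![(0, 0), (0, 1), (1, 0), (1, 1)]

/-- The Kronecker square `T ⊗ T` as a 4×4 matrix with rows/columns ordered 00,01,10,11. -/
def kron2 (T : Matrix (Fin 2) (Fin 2) ℂ) : Matrix (Fin 4) (Fin 4) ℂ :=
  Matrix.of fun i j => T (bits i).1 (bits j).1 * T (bits i).2 (bits j).2

/-- The matrix of `Sym² T` in the basis `e₀², 2 e₀ e₁, e₁²`. -/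
def symSq {R : Type*} [CommRing R] (T : Matrix (Fin 2) (Fin 2) R) : Matrix (Fin 3) (Fin 3) R :=
  !![T 0 0 ^ 2, 2 * (T 0 0 * T 0 1), T 0 1 ^ 2;
     T 0 0 * T 1 0, T 0 0 * T 1 1 + T 0 1 * T 1 0, T 0 1 * T 1 1;
     T 1 0 ^ 2, 2 * (T 1 0 * T 1 1), T 1 1 ^ 2]

theorem det_symSq {R : Type*} [CommRing R] (T : Matrix (Fin 2) (Fin 2) R) :
    (symSq T).det = T.det ^ 3 := by
  simp [symSq, det_fin_three, det_fin_two]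
  ring

theorem A_mul_kron2_mul_B (T : Matrix (Fin 2) (Fin 2) ℂ) : A * kron2 T * B = symSq T := by
  ext i j
  fin_cases i <;> fin_cases j <;>
    simp [A, B, kron2, bits, symSq, mul_apply, Fin.sum_univ_four, vecHead, vecTail] <;> ring

theorem det_phi_kron2 (T : Matrix (Fin 2) (Fin 2) ℂ) :
    (A * kron2 T * B).det = T.det ^ 3 := by
  rw [A_mul_kron2_mul_B, det_symSq]
end
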